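/- arXiv:1803.11443 — 3 statements merged into one kernel-verified Lean document; each statement's English description precedes it below -/
import Mathlib

section
/- For x, y ∈ ℝ³ with x ≠ y, let P(x,y) = I − (x−y)(x−y)ᵀ/|x−y|² be the orthogonal projection onto the plane perpendicular to x−y. Let x_r, x_s, y₀ be three non-collinear points, and let θ_r (resp. θ_s) be the angle at vertex x_r (resp. x_s) of the triangle with vertices x_r, x_s, y₀. Then the matrix M = P(x_r, y₀) P(x_s, x_r) P(y₀, x_s) has rank 2, its nonzero singular values are 1 and |cos θ_r cos θ_s|, and hence its condition number (ratio of largest to smallest nonzero singular value) equals 1/|cos θ_r cos θ_s|, provided cos θ_r cos θ_s ≠ 0. -/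
/-!
All three edges of the triangle are orthogonal to a unit vector `n`. For an edge `v`, the
projector onto `v^⊥` splits as `n nᵀ + u uᵀ`, where `u = (v × n) / |v|` is the unit vector of the
triangle's plane perpendicular to `v`. All these `u` are orthogonal to `n`, so the product of the
three projectors collapses to `n nᵀ + (u₁ ⬝ u₂) (u₂ ⬝ u₃) u₁ u₃ᵀ`; by the quadruple product
identity `(v × n) ⬝ (w × n) = v ⬝ w`, the two coefficients are the cosines of the angles between
consecutive edges, i.e. `-cos θ_r` and `-cos θ_s`. A matrix `p rᵀ + c q tᵀ` with orthonormal pairs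
`(p, q)` and `(r, t)` has singular values `1` and `|c|`.
-/

open Matrix

/-- Orthogonal projection matrix onto the plane perpendicular to `x - y`. -/
noncomputable def projMat (x y : EuclideanSpace ℝ (Fin 3)) : Matrix (Fin 3) (Fin 3) ℝ :=
  1 - (‖x - y‖ ^ 2)⁻¹ • Matrix.vecMulVec (fun i => (x - y) i) (fun i => (x - y) i)

theorem add_mul_add_mul_add_eq {R : Type*} [Ring R] {e r₁ r₂ r₃ : R} (he : e * e = e)
    (h₁ : r₁ * e = 0) (h₂ : e * r₂ = 0) (h₂' : r₂ * e = 0) (h₃ : e * r₃ = 0) :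
    (e + r₁) * (e + r₂) * (e + r₃) = e + r₁ * r₂ * r₃ := by
  have h₁₂ : (e + r₁) * (e + r₂) = e + r₁ * r₂ := by
    rw [add_mul, mul_add, mul_add, he, h₂, h₁, add_zero, zero_add]
  rw [h₁₂, add_mul, mul_add, mul_add, he, h₃, mul_assoc r₁, h₂', mul_zero, add_zero, zero_add]

section VecMulVec

variable {m n R : Type*}

theorem vecMulVec_self_mul_vecMulVec_self_mul_vecMulVec_self [Fintype m] [CommSemiring R]
    (a b c : m → R) :
    vecMulVec a a * vecMulVec b b * vecMulVec c c = (a ⬝ᵥ b * b ⬝ᵥ c) • vecMulVec a c := by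
  rw [vecMulVec_mul_vecMulVec, vecMulVec_smul, smul_mul, vecMulVec_mul_vecMulVec, vecMulVec_smul,
    smul_smul]

theorem of_mul_transpose_of_eq_one [Fintype m] [CommSemiring R] {p q : m → R}
    (hp : p ⬝ᵥ p = 1) (hq : q ⬝ᵥ q = 1) (hpq : p ⬝ᵥ q = 0) :
    of ![p, q] * (of ![p, q])ᵀ = 1 := by
  ext i j
  change ![p, q] i ⬝ᵥ ![p, q] j = (1 : Matrix (Fin 2) (Fin 2) R) i j
  fin_cases i <;> fin_cases j <;> simp [dotProduct_comm q p, hp, hq, hpq]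

theorem transpose_of_mul_diagonal_mul_of [CommSemiring R] (p q : m → R) (r t : n → R) (α β : R) :
    (of ![p, q])ᵀ * diagonal ![α, β] * of ![r, t] = α • vecMulVec p r + β • vecMulVec q t := by
  ext i j
  simp only [mul_apply, transpose_apply, of_apply, Fin.sum_univ_two, diagonal_apply_eq,
    diagonal_apply_ne, ne_eq, one_ne_zero, zero_ne_one, not_false_eq_true, mul_zero, add_zero,
    zero_add, cons_val_zero, cons_val_one, Matrix.add_apply, Matrix.smul_apply, vecMulVec_apply,
    smul_eq_mul]
  ring

theorem exists_svd_vecMulVec_add_smul_vecMulVec [Fintype m] [Fintype n]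
    {p q : m → ℝ} {r t : n → ℝ} (hp : p ⬝ᵥ p = 1) (hq : q ⬝ᵥ q = 1) (hpq : p ⬝ᵥ q = 0)
    (hr : r ⬝ᵥ r = 1) (ht : t ⬝ᵥ t = 1) (hrt : r ⬝ᵥ t = 0) (c : ℝ) :
    ∃ (U : Matrix m (Fin 2) ℝ) (V : Matrix n (Fin 2) ℝ), Uᵀ * U = 1 ∧ Vᵀ * V = 1 ∧
      vecMulVec p r + c • vecMulVec q t = U * diagonal ![1, |c|] * Vᵀ := by
  obtain ⟨s, hs, hc⟩ : ∃ s : ℝ, s * s = 1 ∧ c = s * |c| := by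
    rcases abs_choice c with h | h
    · exact ⟨1, one_mul 1, by rw [h, one_mul]⟩
    · exact ⟨-1, by norm_num, by rw [h]; ring⟩
  refine ⟨(of ![p, s • q])ᵀ, (of ![r, t])ᵀ, ?_, ?_, ?_⟩
  · rw [transpose_transpose]
    exact of_mul_transpose_of_eq_one hp
      (by rw [smul_dotProduct, dotProduct_smul, hq, smul_eq_mul, smul_eq_mul, mul_one, hs])
      (by rw [dotProduct_smul, hpq, smul_zero])
  · rw [transpose_transpose]
    exact of_mul_transpose_of_eq_one hr ht hrt
  · rw [transpose_transpose, transpose_of_mul_diagonal_mul_of, one_smul, smul_vecMulVec, smul_smul,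
      mul_comm, ← hc]

end VecMulVec

theorem rank_mul_diagonal_mul_transpose {K m n ι : Type*} [Field K] [Fintype m] [Fintype n]
    [Fintype ι] [DecidableEq ι] {U : Matrix m ι K} {V : Matrix n ι K} (hU : Uᵀ * U = 1)
    (hV : Vᵀ * V = 1) {d : ι → K} (hd : ∀ i, d i ≠ 0) :
    (U * diagonal d * Vᵀ).rank = Fintype.card ι := by
  refine le_antisymm ((rank_mul_le_left _ _).trans (rank_le_card_width _)) ?_
  have hdiag : Uᵀ * (U * diagonal d * Vᵀ) * V = diagonal d := by
    simp only [Matrix.mul_assoc]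
    rw [hV, Matrix.mul_one, ← Matrix.mul_assoc, hU, Matrix.one_mul]
  have hunit : IsUnit (diagonal d) := isUnit_diagonal.mpr (Pi.isUnit_iff.mpr fun i => (hd i).isUnit)
  calc Fintype.card ι = (diagonal d).rank := (rank_of_isUnit _ hunit).symm
    _ = (Uᵀ * (U * diagonal d * Vᵀ) * V).rank := by rw [hdiag]
    _ ≤ (Uᵀ * (U * diagonal d * Vᵀ)).rank := rank_mul_le_left _ _
    _ ≤ (U * diagonal d * Vᵀ).rank := rank_mul_le_right _ _

theorem vecMulVec_cross_self {R : Type*} [CommRing R] (a b : Fin 3 → R) :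
    vecMulVec (a ⨯₃ b) (a ⨯₃ b) =
      (a ⬝ᵥ a * b ⬝ᵥ b - (a ⬝ᵥ b) ^ 2) • (1 : Matrix (Fin 3) (Fin 3) R)
        - (b ⬝ᵥ b) • vecMulVec a a - (a ⬝ᵥ a) • vecMulVec b b
        + (a ⬝ᵥ b) • (vecMulVec a b + vecMulVec b a) := by
  ext i j
  fin_cases i <;> fin_cases j <;>
    simp only [cross_apply, vec3_dotProduct, vecMulVec_apply, one_apply, Matrix.add_apply,
      Matrix.sub_apply, Matrix.smul_apply, smul_eq_mul, Fin.isValue, cons_val_zero, cons_val_one,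
      cons_val, Fin.zero_eta, Fin.mk_one, Fin.reduceFinMk, Fin.reduceEq, ↓reduceIte] <;> ring

theorem one_sub_smul_vecMulVec_self_eq {K : Type*} [Field K] {v n : Fin 3 → K}
    (hv : v ⬝ᵥ v ≠ 0) (hn : n ⬝ᵥ n = 1) (hvn : v ⬝ᵥ n = 0) :
    1 - (v ⬝ᵥ v)⁻¹ • vecMulVec v v =
      vecMulVec n n + (v ⬝ᵥ v)⁻¹ • vecMulVec (v ⨯₃ n) (v ⨯₃ n) := by
  rw [vecMulVec_cross_self, hn, hvn, mul_one, sq, zero_mul, sub_zero, zero_smul, add_zero]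
  simp only [smul_sub, smul_smul, inv_mul_cancel₀ hv, one_smul]
  abel

theorem exists_norm_eq_one_inner_eq_zero {E : Type*} [NormedAddCommGroup E]
    [InnerProductSpace ℝ E] [FiniteDimensional ℝ E] (h : 2 < Module.finrank ℝ E) (a b : E) :
    ∃ n : E, ‖n‖ = 1 ∧ inner ℝ a n = 0 ∧ inner ℝ b n = 0 := by
  classical
  set K := Submodule.span ℝ ({a, b} : Set E)
  have hK : Module.finrank ℝ K ≤ 2 := by
    have := (finrank_span_finset_le_card (R := ℝ) ({a, b} : Finset E)).trans Finset.card_le_two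
    rwa [Set.finrank, Finset.coe_insert, Finset.coe_singleton] at this
  have hKperp : Kᗮ ≠ ⊥ := by
    intro hbot
    have := K.finrank_add_finrank_orthogonal
    rw [hbot, finrank_bot] at this
    omega
  obtain ⟨z, hzK, hz⟩ := Submodule.exists_mem_ne_zero_of_ne_bot hKperp
  refine ⟨‖z‖⁻¹ • z, norm_smul_inv_norm hz, ?_, ?_⟩ <;> rw [real_inner_smul_right, mul_eq_zero] <;>
    right <;> exact K.inner_right_of_mem_orthogonal (Submodule.subset_span (by simp)) hzK

theorem EuclideanSpace.real_inner_eq_dotProduct {ι : Type*} [Fintype ι]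
    (x y : EuclideanSpace ℝ ι) : inner ℝ x y = x.ofLp ⬝ᵥ y.ofLp := by
  rw [EuclideanSpace.inner_eq_star_dotProduct, star_trivial, dotProduct_comm]

noncomputable def perpDir (v : EuclideanSpace ℝ (Fin 3)) (n : Fin 3 → ℝ) : Fin 3 → ℝ :=
  ‖v‖⁻¹ • (v.ofLp ⨯₃ n)

section PerpDir

open InnerProductGeometry

variable {v w : EuclideanSpace ℝ (Fin 3)} {n : Fin 3 → ℝ}

theorem perpDir_dotProduct (v : EuclideanSpace ℝ (Fin 3)) (n : Fin 3 → ℝ) :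
    perpDir v n ⬝ᵥ n = 0 := by
  rw [perpDir, smul_dotProduct, dotProduct_comm, dot_cross_self, smul_zero]

theorem dotProduct_perpDir (v : EuclideanSpace ℝ (Fin 3)) (n : Fin 3 → ℝ) :
    n ⬝ᵥ perpDir v n = 0 := by
  rw [dotProduct_comm, perpDir_dotProduct]

theorem perpDir_dotProduct_perpDir (hn : n ⬝ᵥ n = 1) (hv : v.ofLp ⬝ᵥ n = 0) :
    perpDir v n ⬝ᵥ perpDir w n = Real.cos (angle v w) := by
  rw [perpDir, perpDir, smul_dotProduct, dotProduct_smul, cross_dot_cross, hn, hv, cos_angle,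
    EuclideanSpace.real_inner_eq_dotProduct, smul_eq_mul, smul_eq_mul]
  ring

theorem perpDir_dotProduct_self (hv : v ≠ 0) (hn : n ⬝ᵥ n = 1) (hvn : v.ofLp ⬝ᵥ n = 0) :
    perpDir v n ⬝ᵥ perpDir v n = 1 := by
  rw [perpDir_dotProduct_perpDir hn hvn, angle_self hv, Real.cos_zero]

end PerpDir

theorem projMat_eq_vecMulVec_add_vecMulVec {x y : EuclideanSpace ℝ (Fin 3)} (hxy : x ≠ y)
    {n : Fin 3 → ℝ} (hn : n ⬝ᵥ n = 1) (hxyn : (x - y).ofLp ⬝ᵥ n = 0) :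
    projMat x y = vecMulVec n n + vecMulVec (perpDir (x - y) n) (perpDir (x - y) n) := by
  have hsq : ‖x - y‖ ^ 2 = (x - y).ofLp ⬝ᵥ (x - y).ofLp := by
    rw [← real_inner_self_eq_norm_sq, EuclideanSpace.real_inner_eq_dotProduct]
  have hne : (x - y).ofLp ⬝ᵥ (x - y).ofLp ≠ 0 := by
    rw [← hsq]
    exact pow_ne_zero 2 (norm_ne_zero_iff.mpr (sub_ne_zero.mpr hxy))
  rw [projMat, perpDir, smul_vecMulVec, vecMulVec_smul, smul_smul, ← mul_inv, ← sq, hsq]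
  exact one_sub_smul_vecMulVec_self_eq hne hn hxyn

theorem exists_unit_dotProduct_sub_eq_zero (x y z : EuclideanSpace ℝ (Fin 3)) :
    ∃ n : Fin 3 → ℝ, n ⬝ᵥ n = 1 ∧ (x - z).ofLp ⬝ᵥ n = 0 ∧ (y - x).ofLp ⬝ᵥ n = 0 ∧
      (z - y).ofLp ⬝ᵥ n = 0 := by
  obtain ⟨n, hn, hyx, hzx⟩ := exists_norm_eq_one_inner_eq_zero (by simp) (y - x) (z - x)
  simp only [EuclideanSpace.real_inner_eq_dotProduct, WithLp.ofLp_sub, sub_dotProduct] at hyx hzx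
  refine ⟨n.ofLp, ?_, ?_, ?_, ?_⟩
  · rw [← EuclideanSpace.real_inner_eq_dotProduct, real_inner_self_eq_norm_sq, hn, one_pow]
  all_goals simp only [WithLp.ofLp_sub, sub_dotProduct]; linarith

open InnerProductGeometry in
theorem projMat_mul_projMat_mul_projMat {xr xs y0 : EuclideanSpace ℝ (Fin 3)} (hrs : xr ≠ xs)
    (hry : xr ≠ y0) (hsy : xs ≠ y0) {n : Fin 3 → ℝ} (hn : n ⬝ᵥ n = 1)
    (hrn : (xr - y0).ofLp ⬝ᵥ n = 0) (hsn : (xs - xr).ofLp ⬝ᵥ n = 0)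
    (hyn : (y0 - xs).ofLp ⬝ᵥ n = 0) :
    projMat xr y0 * projMat xs xr * projMat y0 xs = vecMulVec n n +
      (Real.cos (angle (xs - xr) (y0 - xr)) * Real.cos (angle (xr - xs) (y0 - xs))) •
        vecMulVec (perpDir (xr - y0) n) (perpDir (y0 - xs) n) := by
  rw [projMat_eq_vecMulVec_add_vecMulVec hry hn hrn,
    projMat_eq_vecMulVec_add_vecMulVec hrs.symm hn hsn,
    projMat_eq_vecMulVec_add_vecMulVec hsy.symm hn hyn, add_mul_add_mul_add_eq,
    vecMulVec_self_mul_vecMulVec_self_mul_vecMulVec_self, perpDir_dotProduct_perpDir hn hrn,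
    perpDir_dotProduct_perpDir hn hsn, ← neg_sub y0 xr, ← neg_sub xr xs, angle_neg_left,
    angle_neg_left, Real.cos_pi_sub, Real.cos_pi_sub, angle_comm, neg_mul_neg]
  all_goals simp [vecMulVec_mul_vecMulVec, hn, perpDir_dotProduct, dotProduct_perpDir]

/-- Lemma B.1: the matrix `P(x_r,y₀) P(x_s,x_r) P(y₀,x_s)` has rank 2, nonzero singular
values `1` and `|cos θ_r cos θ_s|`, hence condition number `1/|cos θ_r cos θ_s|`. -/
theorem projector_product_rank_and_condition
    (xr xs y0 : EuclideanSpace ℝ (Fin 3))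
    (hnc : ¬ Collinear ℝ ({xr, xs, y0} : Set (EuclideanSpace ℝ (Fin 3))))
    (hcos : Real.cos (InnerProductGeometry.angle (xs - xr) (y0 - xr))
            * Real.cos (InnerProductGeometry.angle (xr - xs) (y0 - xs)) ≠ 0) :
    (projMat xr y0 * projMat xs xr * projMat y0 xs).rank = 2 ∧
    ∃ U V : Matrix (Fin 3) (Fin 2) ℝ,
      Uᵀ * U = 1 ∧ Vᵀ * V = 1 ∧
      projMat xr y0 * projMat xs xr * projMat y0 xs
        = U * Matrix.diagonal
            ![1, |Real.cos (InnerProductGeometry.angle (xs - xr) (y0 - xr))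
                  * Real.cos (InnerProductGeometry.angle (xr - xs) (y0 - xs))|] * Vᵀ ∧
      (1 : ℝ) / |Real.cos (InnerProductGeometry.angle (xs - xr) (y0 - xr))
                  * Real.cos (InnerProductGeometry.angle (xr - xs) (y0 - xs))|
        = max 1 |Real.cos (InnerProductGeometry.angle (xs - xr) (y0 - xr))
                  * Real.cos (InnerProductGeometry.angle (xr - xs) (y0 - xs))|
          / min 1 |Real.cos (InnerProductGeometry.angle (xs - xr) (y0 - xr))
                  * Real.cos (InnerProductGeometry.angle (xr - xs) (y0 - xs))| := by
  have hrs := ne₁₂_of_not_collinear hnc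
  have hry := ne₁₃_of_not_collinear hnc
  have hsy := ne₂₃_of_not_collinear hnc
  obtain ⟨n, hn, hrn, hsn, hyn⟩ := exists_unit_dotProduct_sub_eq_zero xr xs y0
  set k := Real.cos (InnerProductGeometry.angle (xs - xr) (y0 - xr))
    * Real.cos (InnerProductGeometry.angle (xr - xs) (y0 - xs))
  obtain ⟨U, V, hU, hV, hUV⟩ := exists_svd_vecMulVec_add_smul_vecMulVec hn
    (perpDir_dotProduct_self (sub_ne_zero.mpr hry) hn hrn) (dotProduct_perpDir _ n) hn
    (perpDir_dotProduct_self (sub_ne_zero.mpr hsy.symm) hn hyn) (dotProduct_perpDir _ n) k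
  have hk : |k| ≤ 1 := by
    rw [abs_mul]
    exact mul_le_one₀ (Real.abs_cos_le_one _) (abs_nonneg _) (Real.abs_cos_le_one _)
  rw [projMat_mul_projMat_mul_projMat hrs hry hsy hn hrn hsn hyn, hUV]
  refine ⟨(rank_mul_diagonal_mul_transpose hU hV ?_).trans (Fintype.card_fin 2), U, V, hU, hV,
    rfl, by rw [max_eq_left hk, min_eq_right hk]⟩
  exact Fin.forall_fin_two.mpr ⟨one_ne_zero, abs_ne_zero.mpr hcos⟩
end

section
/- Let z be a unit vector orthogonal to both y₀ − x_s and y₀ − x_r, where x_r, x_s, y₀ ∈ ℝ³ are non-collinear. Set U_{rs} = [z, z×(x_r−x_s)/|z×(x_r−x_s)|] and U_{j0} = [z, z×(y₀−x_j)/|z×(y₀−x_j)|] for j = r, s. Then U_{j0}* U_{rs} = diag(1, cos θ_j), where θ_j is the angle at vertex x_j of the triangle with vertices x_r, x_s, y₀ (possibly up to a sign in the second diagonal entry). -/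
open Matrix
open scoped RealInnerProductSpace

/-!
The unit vector `z` is normal to the plane of the triangle, and on that plane `v ↦ z × v` is a
rotation by a right angle, so by the Binet–Cauchy identity it preserves inner products. Hence the
second columns of `U_{j0}` and `U_{rs}` meet at the angle between `y₀ - x_j` and `x_r - x_s`,
which is `θ_s` at `x_s` and `π - θ_r` at `x_r`; the first columns are both `z`, orthogonal to
the second ones.
-/

/-- Cross product of vectors in `ℝ³` (as Euclidean space). -/
noncomputable def cross3 (u v : EuclideanSpace ℝ (Fin 3)) : EuclideanSpace ℝ (Fin 3) :=
  (WithLp.equiv 2 (Fin 3 → ℝ)).symm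
    ![u 1 * v 2 - u 2 * v 1, u 2 * v 0 - u 0 * v 2, u 0 * v 1 - u 1 * v 0]

/-- The 3×2 matrix with the given columns. -/
noncomputable def colMat (u v : EuclideanSpace ℝ (Fin 3)) : Matrix (Fin 3) (Fin 2) ℝ :=
  Matrix.of fun i j => ![u, v] j i

open InnerProductGeometry

lemma cross3_eq_toLp_cross (u v : EuclideanSpace ℝ (Fin 3)) :
    cross3 u v = WithLp.toLp 2 (u.ofLp ⨯₃ v.ofLp) := by
  rw [cross_apply]; rfl

lemma inner_eq_dotProduct_ofLp {ι : Type*} [Fintype ι] (u v : EuclideanSpace ℝ ι) :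
    ⟪u, v⟫ = u.ofLp ⬝ᵥ v.ofLp := by
  rw [EuclideanSpace.inner_eq_star_dotProduct, star_trivial, dotProduct_comm]

lemma inner_self_cross3 (u v : EuclideanSpace ℝ (Fin 3)) : ⟪u, cross3 u v⟫ = 0 := by
  rw [cross3_eq_toLp_cross, inner_eq_dotProduct_ofLp, dot_self_cross]

lemma inner_cross3_cross3 (u v w x : EuclideanSpace ℝ (Fin 3)) :
    ⟪cross3 u v, cross3 w x⟫ = ⟪u, w⟫ * ⟪v, x⟫ - ⟪u, x⟫ * ⟪v, w⟫ := by
  simp only [cross3_eq_toLp_cross, inner_eq_dotProduct_ofLp]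
  exact cross_dot_cross _ _ _ _

lemma norm_cross3_of_inner_eq_zero {u v : EuclideanSpace ℝ (Fin 3)} (h : ⟪u, v⟫ = 0) :
    ‖cross3 u v‖ = ‖u‖ * ‖v‖ := by
  have hsq : ‖cross3 u v‖ ^ 2 = (‖u‖ * ‖v‖) ^ 2 := by
    rw [← real_inner_self_eq_norm_sq, inner_cross3_cross3, h, zero_mul, sub_zero,
      real_inner_self_eq_norm_sq, real_inner_self_eq_norm_sq, mul_pow]
  exact (pow_left_inj₀ (norm_nonneg _) (by positivity) two_ne_zero).mp hsq

lemma colMat_transpose_mul_colMat (u v u' v' : EuclideanSpace ℝ (Fin 3)) :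
    (colMat u v)ᵀ * colMat u' v' = !![⟪u, u'⟫, ⟪u, v'⟫; ⟪v, u'⟫, ⟪v, v'⟫] := by
  ext i j
  fin_cases i <;> fin_cases j <;>
    simp [Matrix.mul_apply, colMat, Fin.sum_univ_three, inner_eq_dotProduct_ofLp, dotProduct]

lemma inner_normalized_cross3 {z v w : EuclideanSpace ℝ (Fin 3)} (hz : ‖z‖ = 1)
    (hv : ⟪z, v⟫ = 0) (hw : ⟪z, w⟫ = 0) :
    ⟪‖cross3 z v‖⁻¹ • cross3 z v, ‖cross3 z w‖⁻¹ • cross3 z w⟫ = Real.cos (angle v w) := by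
  rw [real_inner_smul_left, real_inner_smul_right, inner_cross3_cross3, hw, zero_mul, sub_zero,
    real_inner_self_eq_norm_sq, hz, norm_cross3_of_inner_eq_zero hv,
    norm_cross3_of_inner_eq_zero hw, hz, cos_angle]
  field_simp

lemma colMat_cross3_transpose_mul {z v w : EuclideanSpace ℝ (Fin 3)} (hz : ‖z‖ = 1)
    (hv : ⟪z, v⟫ = 0) (hw : ⟪z, w⟫ = 0) :
    (colMat z (‖cross3 z v‖⁻¹ • cross3 z v))ᵀ * colMat z (‖cross3 z w‖⁻¹ • cross3 z w)
      = Matrix.diagonal ![1, Real.cos (angle v w)] := by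
  rw [colMat_transpose_mul_colMat, inner_normalized_cross3 hz hv hw, real_inner_smul_right,
    real_inner_smul_left, inner_self_cross3, real_inner_comm z (cross3 z v), inner_self_cross3,
    real_inner_self_eq_norm_sq, hz]
  ext i j
  fin_cases i <;> fin_cases j <;> simp

theorem svd_basis_angle_computation_general
    (xr xs y0 z : EuclideanSpace ℝ (Fin 3))
    (hz : ‖z‖ = 1) (hzs : ⟪z, y0 - xs⟫ = 0) (hzr : ⟪z, y0 - xr⟫ = 0) :
    let Urs := colMat z ((‖cross3 z (xr - xs)‖)⁻¹ • cross3 z (xr - xs))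
    let Ur0 := colMat z ((‖cross3 z (y0 - xr)‖)⁻¹ • cross3 z (y0 - xr))
    let Us0 := colMat z ((‖cross3 z (y0 - xs)‖)⁻¹ • cross3 z (y0 - xs))
    ∃ εr εs : ℝ, (εr = 1 ∨ εr = -1) ∧ (εs = 1 ∨ εs = -1) ∧
      Ur0ᵀ * Urs
        = Matrix.diagonal ![1, εr * Real.cos (InnerProductGeometry.angle (xs - xr) (y0 - xr))] ∧
      Us0ᵀ * Urs
        = Matrix.diagonal ![1, εs * Real.cos (InnerProductGeometry.angle (xr - xs) (y0 - xs))] := by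
  have hzrs : ⟪z, xr - xs⟫ = 0 := by
    rw [← sub_sub_sub_cancel_left xs xr y0, inner_sub_right, hzs, hzr, sub_zero]
  refine ⟨-1, 1, Or.inr rfl, Or.inl rfl, ?_, ?_⟩
  · rw [colMat_cross3_transpose_mul hz hzr hzrs, ← neg_sub xs xr, angle_neg_right,
      Real.cos_pi_sub, angle_comm, neg_one_mul]
  · rw [colMat_cross3_transpose_mul hz hzs hzrs, angle_comm, one_mul]

/-- Appendix B computation: `U_{j0}ᵀ U_{rs} = diag(1, cos θ_j)` up to a sign in the
second diagonal entry, for `j = r, s`. -/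
theorem svd_basis_angle_computation
    (xr xs y0 z : EuclideanSpace ℝ (Fin 3))
    (hnc : ¬ Collinear ℝ ({xr, xs, y0} : Set (EuclideanSpace ℝ (Fin 3))))
    (hz : ‖z‖ = 1) (hzs : ⟪z, y0 - xs⟫ = 0) (hzr : ⟪z, y0 - xr⟫ = 0) :
    let Urs := colMat z ((‖cross3 z (xr - xs)‖)⁻¹ • cross3 z (xr - xs))
    let Ur0 := colMat z ((‖cross3 z (y0 - xr)‖)⁻¹ • cross3 z (y0 - xr))
    let Us0 := colMat z ((‖cross3 z (y0 - xs)‖)⁻¹ • cross3 z (y0 - xs))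
    ∃ εr εs : ℝ, (εr = 1 ∨ εr = -1) ∧ (εs = 1 ∨ εs = -1) ∧
      Ur0ᵀ * Urs
        = Matrix.diagonal ![1, εr * Real.cos (InnerProductGeometry.angle (xs - xr) (y0 - xr))] ∧
      Us0ᵀ * Urs
        = Matrix.diagonal ![1, εs * Real.cos (InnerProductGeometry.angle (xr - xs) (y0 - xs))] :=
  svd_basis_angle_computation_general xr xs y0 z hz hzs hzr
end

section
/- Let f, g ∈ L¹(ℝ) with Fourier transforms f̂(ω) = (1/2π)∫ f(t) e^{iωt} dt, ĝ(ω), and let a, b ∈ ℝ, T > 0. Then (1/(2T)²) ∫_{−T}^{T} ∫_{−T}^{T} f(t − t' + a) g(t' − t + b) dt dt' = ∫∫ f̂(ω) ĝ(ω') e^{−iωa} e^{−iω'b} sinc²(T(ω − ω')) dω dω', where sinc(u) = sin(u)/u. -/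
/-!
Insert the inversion formulas `f(x) = ∫ f̂(ω) e^{-iωx} dω`, `g(y) = ∫ ĝ(ω') e^{-iω'y} dω'` and
exchange the time integrals with the frequency integrals; Fubini applies because `f̂ ⊗ ĝ` is
integrable and the phases have modulus one on the finite-measure square `[-T, T]²`. The phase
`e^{-iω(t-t'+a)} e^{-iω'(t'-t+b)}` splits as `e^{-iωa} e^{-iω'b} e^{-i(ω-ω')t} e^{i(ω-ω')t'}`,
and `∫_{-T}^{T} e^{-iνt} dt = 2T sinc(Tν)`, so the time average is
`e^{-iωa} e^{-iω'b} sinc²(T(ω-ω'))`.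
-/

open MeasureTheory

/-- `sinc u = sin u / u`, with `sinc 0 = 1`. -/
noncomputable def sinc (t : ℝ) : ℝ := if t = 0 then 1 else Real.sin t / t

open Complex Function

theorem sinc_eq_real_sinc : sinc = Real.sinc := rfl

section Fubini

variable {X Y 𝕜 : Type*} [MeasurableSpace X] [MeasurableSpace Y] [RCLike 𝕜]
  {μ : Measure X} {ν : Measure Y} [IsFiniteMeasure μ] [SFinite ν]
  {Φ : Y → 𝕜} {K : X → Y → 𝕜} {C : ℝ}

theorem integrable_prod_mul_of_norm_le (hΦ : Integrable Φ ν)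
    (hK : AEStronglyMeasurable (uncurry K) (μ.prod ν)) (hKC : ∀ x y, ‖K x y‖ ≤ C) :
    Integrable (uncurry fun x y => Φ y * K x y) (μ.prod ν) :=
  (hΦ.comp_snd μ).mul_bdd hK (.of_forall fun z => hKC z.1 z.2)

theorem integral_integral_mul_swap_of_norm_le (hΦ : Integrable Φ ν)
    (hK : AEStronglyMeasurable (uncurry K) (μ.prod ν)) (hKC : ∀ x y, ‖K x y‖ ≤ C) :
    ∫ x, ∫ y, Φ y * K x y ∂ν ∂μ = ∫ y, Φ y * ∫ x, K x y ∂μ ∂ν := by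
  rw [integral_integral_swap (integrable_prod_mul_of_norm_le hΦ hK hKC)]
  simp only [integral_const_mul]

end Fubini

noncomputable def phase (ω t : ℝ) : ℂ := cexp (-(I * ω * t))

theorem norm_phase (ω t : ℝ) : ‖phase ω t‖ = 1 := by
  rw [phase, norm_exp]
  simp

@[fun_prop]
theorem Continuous.phase {α : Type*} [TopologicalSpace α] {f g : α → ℝ} (hf : Continuous f)
    (hg : Continuous g) : Continuous fun x => phase (f x) (g x) := by
  unfold _root_.phase
  fun_prop

theorem phase_sub_add_mul_phase_sub_add (ω ω' t t' a b : ℝ) :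
    phase ω (t - t' + a) * phase ω' (t' - t + b)
      = phase ω a * phase ω' b * (phase (ω - ω') t * phase (ω' - ω) t') := by
  simp only [phase, ← Complex.exp_add]
  congr 1
  push_cast
  ring

theorem integral_phase_Icc {T : ℝ} (hT : 0 ≤ T) (ω : ℝ) :
    ∫ t in Set.Icc (-T) T, phase ω t = ((2 * T * Real.sinc (T * ω) : ℝ) : ℂ) := by
  rw [integral_Icc_eq_integral_Ioc, ← intervalIntegral.integral_of_le (by linarith)]
  rcases eq_or_ne ω 0 with rfl | hω
  · simp [phase, two_mul]
  have hphase : ∀ t : ℝ, phase ω t = cexp (↑(-ω * t) * I) := fun t => by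
    rw [phase]; push_cast; ring_nf
  simp only [hphase]
  rw [intervalIntegral.integral_comp_mul_left (fun x : ℝ => cexp (x * I)) (neg_ne_zero.2 hω),
    show -ω * -T = -(-ω * T) by ring, integral_exp_mul_I_eq_sinc, neg_mul, Real.sinc_neg,
    mul_comm ω T, real_smul]
  have hω' : (ω : ℂ) ≠ 0 := ofReal_ne_zero.2 hω
  push_cast
  field_simp

theorem integral_mul_phase_mul_integral_mul_phase (φ ψ : ℝ → ℂ) (x y : ℝ) :
    (∫ ω, φ ω * phase ω x) * (∫ ω', ψ ω' * phase ω' y)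
      = ∫ q, φ q.1 * ψ q.2 * (phase q.1 x * phase q.2 y) ∂(volume.prod volume) := by
  rw [← integral_prod_mul]
  congr with q
  ring

theorem integral_Icc_prod_phase_sub_add_mul_phase_sub_add {T : ℝ} (hT : 0 ≤ T) (ω ω' a b : ℝ) :
    ∫ p, phase ω (p.1 - p.2 + a) * phase ω' (p.2 - p.1 + b)
        ∂((volume.restrict (Set.Icc (-T) T)).prod (volume.restrict (Set.Icc (-T) T)))
      = phase ω a * phase ω' b * ((2 * T * Real.sinc (T * (ω - ω'))) ^ 2 : ℝ) := by
  simp only [phase_sub_add_mul_phase_sub_add ω ω', integral_const_mul]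
  rw [integral_prod_mul (fun t => phase (ω - ω') t) (fun t' => phase (ω' - ω) t'),
    integral_phase_Icc hT, integral_phase_Icc hT, ← neg_sub ω, mul_neg, Real.sinc_neg]
  push_cast
  ring

theorem integrable_mul_phase_mul_phase_mul_sinc_sq {Φ : ℝ × ℝ → ℂ}
    (hΦ : Integrable Φ (volume.prod volume)) (a b T : ℝ) :
    Integrable (fun q => Φ q * (phase q.1 a * phase q.2 b
      * ((Real.sinc (T * (q.1 - q.2)) ^ 2 : ℝ) : ℂ))) (volume.prod volume) := by
  refine hΦ.mul_bdd (c := 1) (Continuous.aestronglyMeasurable (by fun_prop))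
    (.of_forall fun q => ?_)
  rw [norm_mul, norm_mul, norm_phase, norm_phase, one_mul, one_mul, norm_real, Real.norm_eq_abs,
    abs_pow, pow_le_one_iff_of_nonneg (abs_nonneg _) two_ne_zero]
  exact Real.abs_sinc_le_one _

theorem time_average_fejer_identity_general
    (f g fhat ghat : ℝ → ℂ)
    (hfhat : Integrable fhat) (hghat : Integrable ghat)
    (hfinv : ∀ t : ℝ, f t = ∫ ω : ℝ, fhat ω * Complex.exp (-(Complex.I * (ω : ℂ) * (t : ℂ))))
    (hginv : ∀ t : ℝ, g t = ∫ ω : ℝ, ghat ω * Complex.exp (-(Complex.I * (ω : ℂ) * (t : ℂ))))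
    (a b T : ℝ) (hT : 0 < T) :
    ((1 / (2 * T) ^ 2 : ℝ) : ℂ)
        * ∫ t in Set.Icc (-T) T, ∫ t' in Set.Icc (-T) T, f (t - t' + a) * g (t' - t + b)
      = ∫ ω : ℝ, ∫ ω' : ℝ,
          fhat ω * ghat ω' * Complex.exp (-(Complex.I * (ω : ℂ) * (a : ℂ)))
            * Complex.exp (-(Complex.I * (ω' : ℂ) * (b : ℂ)))
            * ((sinc (T * (ω - ω')) ^ 2 : ℝ) : ℂ) := by
  set μ := volume.restrict (Set.Icc (-T) T)
  set Φ : ℝ × ℝ → ℂ := fun q => fhat q.1 * ghat q.2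
  set K : ℝ × ℝ → ℝ × ℝ → ℂ := fun p q => phase q.1 (p.1 - p.2 + a) * phase q.2 (p.2 - p.1 + b)
  have hΦ : Integrable Φ (volume.prod volume) := hfhat.mul_prod hghat
  have hK : AEStronglyMeasurable (uncurry K) ((μ.prod μ).prod (volume.prod volume)) :=
    Continuous.aestronglyMeasurable (by simp only [K]; fun_prop)
  have hK1 (p q : ℝ × ℝ) : ‖K p q‖ ≤ 1 := by simp [K, norm_phase]
  have hsignal (t t' : ℝ) : f (t - t' + a) * g (t' - t + b)
      = ∫ q, Φ q * K (t, t') q ∂(volume.prod volume) := by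
    rw [hfinv, hginv]
    exact integral_mul_phase_mul_integral_mul_phase fhat ghat _ _
  calc _ = ((1 / (2 * T) ^ 2 : ℝ) : ℂ)
          * ∫ p, ∫ q, Φ q * K p q ∂(volume.prod volume) ∂(μ.prod μ) := by
        simp_rw [hsignal]
        rw [integral_integral (integrable_prod_mul_of_norm_le hΦ hK hK1).integral_prod_left]
    _ = ((1 / (2 * T) ^ 2 : ℝ) : ℂ)
          * ∫ q, Φ q * ∫ p, K p q ∂(μ.prod μ) ∂(volume.prod volume) := by
        rw [integral_integral_mul_swap_of_norm_le hΦ hK hK1]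
    _ = ∫ q, Φ q * (phase q.1 a * phase q.2 b
          * ((Real.sinc (T * (q.1 - q.2)) ^ 2 : ℝ) : ℂ)) ∂(volume.prod volume) := by
        have hT' : (T : ℂ) ≠ 0 := ofReal_ne_zero.2 hT.ne'
        rw [← integral_const_mul]
        congr with q
        rw [integral_Icc_prod_phase_sub_add_mul_phase_sub_add hT.le]
        push_cast
        field_simp
    _ = _ := by
        rw [integral_prod _ (integrable_mul_phase_mul_phase_mul_sinc_sq hΦ a b T)]
        simp only [Φ, phase, sinc_eq_real_sinc, mul_assoc]

/-- Double-integral identity from the proof of Proposition 6.1 (Appendix A):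
time averages of products of shifted signals reduce to frequency integrals against the
Fejér-type kernel `sinc²(T(ω−ω'))`. -/
theorem time_average_fejer_identity
    (f g fhat ghat : ℝ → ℂ)
    (hf : Integrable f) (hg : Integrable g)
    (hfhat : Integrable fhat) (hghat : Integrable ghat)
    (hfhat_def : ∀ ω : ℝ, fhat ω
      = (1 / (2 * Real.pi) : ℂ) * ∫ t : ℝ, f t * Complex.exp (Complex.I * (ω : ℂ) * (t : ℂ)))
    (hghat_def : ∀ ω : ℝ, ghat ω
      = (1 / (2 * Real.pi) : ℂ) * ∫ t : ℝ, g t * Complex.exp (Complex.I * (ω : ℂ) * (t : ℂ)))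
    (hfinv : ∀ t : ℝ, f t = ∫ ω : ℝ, fhat ω * Complex.exp (-(Complex.I * (ω : ℂ) * (t : ℂ))))
    (hginv : ∀ t : ℝ, g t = ∫ ω : ℝ, ghat ω * Complex.exp (-(Complex.I * (ω : ℂ) * (t : ℂ))))
    (a b T : ℝ) (hT : 0 < T) :
    ((1 / (2 * T) ^ 2 : ℝ) : ℂ)
        * ∫ t in Set.Icc (-T) T, ∫ t' in Set.Icc (-T) T, f (t - t' + a) * g (t' - t + b)
      = ∫ ω : ℝ, ∫ ω' : ℝ,
          fhat ω * ghat ω' * Complex.exp (-(Complex.I * (ω : ℂ) * (a : ℂ)))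
            * Complex.exp (-(Complex.I * (ω' : ℂ) * (b : ℂ)))
            * ((sinc (T * (ω - ω')) ^ 2 : ℝ) : ℂ) :=
  time_average_fejer_identity_general f g fhat ghat hfhat hghat hfinv hginv a b T hT
end
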